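/- For every natural number a ≥ 1 and every integer d, μ_{2a+1}(d) = (1/2)·μ_a(d-1) + (1/2)·μ_{a+1}(d+1). -/

import Mathlib

open Filter

/-- `s2 n` is the number of digits 1 in the binary expansion of `n`. -/
def s2 (n : ℕ) : ℕ := (Nat.digits 2 n).sum

/-- `HasMu a d L` means that the density of `{x : s2 (x+a) - s2 x = d}` exists
and equals `L`. -/
def HasMu (a : ℕ) (d : ℤ) (L : ℝ) : Prop :=
  Tendsto
    (fun N : ℕ =>
      (((Finset.range (N + 1)).filter
          (fun x => (s2 (x + a) : ℤ) - s2 x = d)).card : ℝ) / N)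
    atTop (nhds L)

/-!
Split `x ≤ N` by parity. For `x = 2y` the last binary digit of `x + 2a + 1` is a new `1`, so
`s2 (x + 2a + 1) - s2 x = s2 (y + a) - s2 y + 1`; for `x = 2y + 1` the last digit `1` of `x` is
lost and `s2 (x + 2a + 1) - s2 x = s2 (y + a + 1) - s2 y - 1`. Each parity class is indexed by
`y ≤ N / 2` (roughly), which contributes the factors `1 / 2`.
-/

open Finset Topology

lemma s2_eq_mod_two_add_s2_div_two (n : ℕ) : s2 n = n % 2 + s2 (n / 2) := by
  rcases Nat.eq_zero_or_pos n with rfl | hn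
  · simp [s2]
  · rw [s2, Nat.digits_def' one_lt_two hn, List.sum_cons, s2]

lemma s2_two_mul (n : ℕ) : s2 (2 * n) = s2 n := by
  rw [s2_eq_mod_two_add_s2_div_two]; simp

lemma s2_two_mul_add_one (n : ℕ) : s2 (2 * n + 1) = s2 n + 1 := by
  rw [s2_eq_mod_two_add_s2_div_two, show (2 * n + 1) / 2 = n by omega]
  omega

lemma sum_range_eq_sum_even_add_sum_odd {M : Type*} [AddCommMonoid M] (f : ℕ → M) (N : ℕ) :
    ∑ x ∈ range N, f x =
      ∑ y ∈ range ((N + 1) / 2), f (2 * y) + ∑ y ∈ range (N / 2), f (2 * y + 1) := by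
  induction N using Nat.twoStepInduction with
  | zero => simp
  | one => simp
  | more n ih _ =>
    rw [sum_range_succ, sum_range_succ, ih, show (n + 2 + 1) / 2 = (n + 1) / 2 + 1 by omega,
      show (n + 2) / 2 = n / 2 + 1 by omega, sum_range_succ, sum_range_succ]
    rcases Nat.even_or_odd' n with ⟨k, rfl | rfl⟩
    · rw [show (2 * k + 1) / 2 = k by omega, show 2 * k / 2 = k by omega]
      abel
    · rw [show (2 * k + 1 + 1) / 2 = k + 1 by omega, show (2 * k + 1) / 2 = k by omega]
      abel

lemma card_filter_range_eq_card_even_add_card_odd (P : ℕ → Prop) [DecidablePred P] (N : ℕ) :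
    #{x ∈ range N | P x} =
      #{y ∈ range ((N + 1) / 2) | P (2 * y)} + #{y ∈ range (N / 2) | P (2 * y + 1)} := by
  simp only [card_filter]
  exact sum_range_eq_sum_even_add_sum_odd _ N

def digitDiffCount (a : ℕ) (d : ℤ) (N : ℕ) : ℕ :=
  #{x ∈ range (N + 1) | (s2 (x + a) : ℤ) - s2 x = d}

lemma s2_diff_two_mul (a y : ℕ) :
    (s2 (2 * y + (2 * a + 1)) : ℤ) - s2 (2 * y) = (s2 (y + a) : ℤ) - s2 y + 1 := by
  rw [show 2 * y + (2 * a + 1) = 2 * (y + a) + 1 by ring, s2_two_mul_add_one, s2_two_mul]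
  push_cast; ring

lemma s2_diff_two_mul_add_one (a y : ℕ) :
    (s2 (2 * y + 1 + (2 * a + 1)) : ℤ) - s2 (2 * y + 1) = (s2 (y + (a + 1)) : ℤ) - s2 y - 1 := by
  rw [show 2 * y + 1 + (2 * a + 1) = 2 * (y + (a + 1)) by ring, s2_two_mul, s2_two_mul_add_one]
  push_cast; ring

lemma digitDiffCount_two_mul_add_one (a : ℕ) (d : ℤ) {N : ℕ} (hN : 1 ≤ N) :
    digitDiffCount (2 * a + 1) d N =
      digitDiffCount a (d - 1) (N / 2) + digitDiffCount (a + 1) (d + 1) ((N - 1) / 2) := by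
  rw [digitDiffCount, card_filter_range_eq_card_even_add_card_odd,
    show (N + 1 + 1) / 2 = N / 2 + 1 by omega, show (N + 1) / 2 = (N - 1) / 2 + 1 by omega]
  simp only [digitDiffCount, s2_diff_two_mul, s2_diff_two_mul_add_one]
  congr 2 <;> refine filter_congr fun y _ => ?_ <;> omega

lemma tendsto_sub_div_two_div_self (k : ℕ) :
    Tendsto (fun N : ℕ => (((N - k) / 2 : ℕ) : ℝ) / N) atTop (𝓝 (1 / 2)) := by
  have hlo : Tendsto (fun N : ℕ => 1 / 2 - ((k + 1) / 2 : ℝ) / N) atTop (𝓝 (1 / 2)) := by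
    simpa using tendsto_const_nhds.sub (tendsto_const_div_atTop_nhds_zero_nat ((k + 1) / 2 : ℝ))
  refine tendsto_of_tendsto_of_tendsto_of_le_of_le' hlo tendsto_const_nhds ?_ ?_ <;>
    filter_upwards [eventually_gt_atTop 0] with N hN
  · have : (N : ℝ) ≤ 2 * ((N - k) / 2 : ℕ) + k + 1 := by norm_cast; omega
    rw [sub_le_iff_le_add, ← add_div, le_div_iff₀ (by positivity)]
    linarith
  · have : 2 * (((N - k) / 2 : ℕ) : ℝ) ≤ N := by norm_cast; omega
    rw [div_le_iff₀ (by positivity)]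
    linarith

lemma tendsto_comp_sub_div_two_div {u : ℕ → ℝ} {L : ℝ}
    (hu : Tendsto (fun M : ℕ => u M / M) atTop (𝓝 L)) (k : ℕ) :
    Tendsto (fun N : ℕ => u ((N - k) / 2) / N) atTop (𝓝 (1 / 2 * L)) := by
  have hg : Tendsto (fun N : ℕ => (N - k) / 2) atTop atTop :=
    (Nat.tendsto_div_const_atTop two_ne_zero).comp (tendsto_sub_atTop_nat k)
  rw [mul_comm]
  refine ((hu.comp hg).mul (tendsto_sub_div_two_div_self k)).congr' ?_
  filter_upwards [hg.eventually_ne_atTop 0] with N hN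
  have : (((N - k) / 2 : ℕ) : ℝ) ≠ 0 := Nat.cast_ne_zero.mpr hN
  simp only [Function.comp_apply]
  field_simp

theorem mu_two_mul_add_one_general (a : ℕ) (d : ℤ) (L1 L2 L3 : ℝ)
    (h1 : HasMu (2 * a + 1) d L1) (h2 : HasMu a (d - 1) L2)
    (h3 : HasMu (a + 1) (d + 1) L3) :
    L1 = (1 / 2) * L2 + (1 / 2) * L3 := by
  change Tendsto (fun N : ℕ => (digitDiffCount _ _ N : ℝ) / N) atTop (𝓝 _) at h1 h2 h3
  have hsplit := (tendsto_comp_sub_div_two_div h2 0).add (tendsto_comp_sub_div_two_div h3 1)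
  refine tendsto_nhds_unique h1 (hsplit.congr' ?_)
  filter_upwards [eventually_ge_atTop 1] with N hN
  rw [digitDiffCount_two_mul_add_one a d hN, Nat.sub_zero]
  push_cast
  ring

theorem mu_two_mul_add_one (a : ℕ) (ha : 1 ≤ a) (d : ℤ) (L1 L2 L3 : ℝ)
    (h1 : HasMu (2 * a + 1) d L1) (h2 : HasMu a (d - 1) L2)
    (h3 : HasMu (a + 1) (d + 1) L3) :
    L1 = (1 / 2) * L2 + (1 / 2) * L3 :=
  mu_two_mul_add_one_general a d L1 L2 L3 h1 h2 h3
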